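/- (Cardinality Increment or Saturation; lem:cardinality-inc-or-sat) For every typing environment Γ, qualifier q, and natural number n, letting p = qtransⁿ_Γ(q), either card_Γ(q) + n ≤ card_Γ(p), or p is propositionally saturated in Γ (for every x ∈ p and every y with Γ ⊢ x ↝* y, one has y ∈ p). -/
import Mathlib


/-- Variables are natural numbers (a fixed type with decidable equality). -/
abbrev Var := ℕ

/-- A qualifier is a finite set of variables. -/
abbrev Qual := Finset Var

/-- A typing environment is a finite list of bindings of a variable to a qualifier. -/
abbrev Env := List (Var × Qual)

/-- Cardinality of a qualifier `q` w.r.t. `Γ`: counts the bindings of `Γ`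
whose bound variable lies in `q`. -/
def card (Γ : Env) (q : Qual) : ℕ :=
  match Γ with
  | [] => 0
  | (x, _) :: Γ' => if x ∈ q then 1 + card Γ' q else card Γ' q

/-- One-step reachability: `Γ ⊢ x ↝ y` iff some binding `(x, p) ∈ Γ` has `y ∈ p`. -/
def reaches (Γ : Env) (x y : Var) : Prop :=
  ∃ p : Qual, (x, p) ∈ Γ ∧ y ∈ p

/-- Transitive reachability `Γ ⊢ x ↝* y`: the transitive closure of `reaches`. -/
inductive reachesStar (Γ : Env) : Var → Var → Prop
  | base {x y : Var} : reaches Γ x y → reachesStar Γ x y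
  | step {x z y : Var} : reaches Γ x z → reachesStar Γ z y → reachesStar Γ x y

/-- One-step expansion: `step_Γ(q) = q ∪ ⋃_{x ∈ q} { y | Γ ⊢ x ↝ y }`. -/
def stepQ (Γ : Env) (q : Qual) : Qual :=
  q ∪ Γ.toFinset.biUnion (fun b => if b.1 ∈ q then b.2 else ∅)

/-- Fuel-indexed transitive lookup. -/
def qtransN (Γ : Env) : ℕ → Qual → Qual
  | 0, q => q
  | n + 1, q => qtransN Γ n (stepQ Γ q)

/-- Full transitive lookup: iterate `|Γ|` times. -/
def qtrans (Γ : Env) (q : Qual) : Qual := qtransN Γ Γ.length q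

/-- Propositional saturation: `⋃_{x ∈ q} { y | Γ ⊢ x ↝* y } ⊆ q`. -/
def psat (Γ : Env) (q : Qual) : Prop :=
  ∀ x ∈ q, ∀ y : Var, reachesStar Γ x y → y ∈ q


lemma subset_stepQ (Γ : Env) (q : Qual) : q ⊆ stepQ Γ q := Finset.subset_union_left

lemma card_mono (Γ : Env) {q r : Qual} (h : q ⊆ r) : card Γ q ≤ card Γ r := by
  induction Γ with
  | nil => simp [card]
  | cons b Γ' ih =>
    obtain ⟨x, p⟩ := b
    simp only [card]
    by_cases hx : x ∈ q
    · simp [hx, h hx]; omega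
    · by_cases hxr : x ∈ r <;> simp [hx, hxr] <;> omega

lemma card_eq_bound (Γ : Env) {q r : Qual} (h : q ⊆ r)
    (hc : card Γ r ≤ card Γ q) : ∀ z p, (z, p) ∈ Γ → z ∈ r → z ∈ q := by
  induction Γ with
  | nil => intro z p hz; simp at hz
  | cons b Γ' ih =>
    obtain ⟨x, p0⟩ := b
    intro z p hz hzr
    simp only [card] at hc
    by_cases hx : x ∈ q
    · have hxr : x ∈ r := h hx
      simp [hx, hxr] at hc
      rcases List.mem_cons.1 hz with he | ht
      · cases he; exact hx
      · exact ih (by omega) z p ht hzr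
    · by_cases hxr : x ∈ r
      · simp [hx, hxr] at hc
        have := card_mono Γ' h
        omega
      · simp [hx, hxr] at hc
        rcases List.mem_cons.1 hz with he | ht
        · cases he; exact absurd hzr hxr
        · exact ih hc z p ht hzr

lemma stepQ_fix_of_card_eq (Γ : Env) {q : Qual}
    (hc : card Γ (stepQ Γ q) ≤ card Γ q) : stepQ Γ (stepQ Γ q) = stepQ Γ q := by
  apply Finset.Subset.antisymm _ (subset_stepQ Γ _)
  intro y hy
  rcases Finset.mem_union.1 hy with hy | hy
  · exact hy
  · rcases Finset.mem_biUnion.1 hy with ⟨b, hb, hyb⟩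
    by_cases hb1 : b.1 ∈ stepQ Γ q
    · rw [if_pos hb1] at hyb
      have hb1q : b.1 ∈ q :=
        card_eq_bound Γ (subset_stepQ Γ q) hc b.1 b.2 (by
          simpa using List.mem_toFinset.1 hb) hb1
      apply Finset.mem_union_right
      exact Finset.mem_biUnion.2 ⟨b, hb, by simpa [hb1q] using hyb⟩
    · simp [hb1] at hyb

lemma qtransN_fix (Γ : Env) {q : Qual} (h : stepQ Γ q = q) :
    ∀ n, qtransN Γ n q = q := by
  intro n
  induction n with
  | zero => rfl
  | succ n ih => simpa [qtransN, h] using ih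

lemma psat_of_fix (Γ : Env) {q : Qual} (h : stepQ Γ q = q) : psat Γ q := by
  have hstep : ∀ x ∈ q, ∀ y, reaches Γ x y → y ∈ q := by
    intro x hx y ⟨p, hp, hy⟩
    rw [← h]
    exact Finset.mem_union_right _ <|
      Finset.mem_biUnion.2 ⟨(x, p), List.mem_toFinset.2 hp, by simpa [hx] using hy⟩
  intro x hx y hr
  induction hr with
  | base h1 => exact hstep _ hx _ h1
  | step h1 _ ih => exact ih (hstep _ hx _ h1)

/-- Cardinality Increment or Saturation. -/
theorem cardinality_inc_or_sat (Γ : Env) (q : Qual) (n : ℕ) :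
    card Γ q + n ≤ card Γ (qtransN Γ n q) ∨ psat Γ (qtransN Γ n q) := by
  induction n generalizing q with
  | zero => left; simp [qtransN]
  | succ n ih =>
    by_cases hc : card Γ q + 1 ≤ card Γ (stepQ Γ q)
    · rcases ih (stepQ Γ q) with h | h
      · left; simpa [qtransN] using by omega
      · right; simpa [qtransN] using h
    · right
      have hfix := stepQ_fix_of_card_eq Γ (q := q) (by omega)
      have := qtransN_fix Γ hfix n
      simpa [qtransN, this] using psat_of_fix Γ hfix
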